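/- Let φ: P^1 → P^2, (X1:X2) ↦ (g1:g2:g3), with g1,g2,g3 homogeneous of degree d ≥ 2 over an algebraically closed field, gcd(g1,g2,g3) a nonzero constant, and let (p,q) be a μ-basis with μ = 1: p = U0(T)X1 + U1(T)X2 with U0, U1 linear forms in K[T1,T2,T3]. If d ≥ 3 and φ is birational onto its image C, then C has a unique proper singular point 𝔭, this point has multiplicity d−1, and U0(𝔭) = U1(𝔭) = 0. -/

import Mathlib

open MvPolynomial

noncomputable section

/-- The Sylvester matrix of two binary forms of degrees `d1`, `d2` with coefficient
sequences `U` (so `f1 = Σ U i · X1^{d1−i} X2^i`) and `V`. -/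
def sylMatrix {A : Type*} [CommRing A] (d1 d2 : ℕ) (U V : ℕ → A) :
    Matrix (Fin (d1 + d2)) (Fin (d1 + d2)) A :=
  Matrix.of fun i j =>
    if (j : ℕ) < d2 then
      (if (j : ℕ) ≤ i ∧ (i : ℕ) ≤ (j : ℕ) + d1 then U ((i : ℕ) - j) else 0)
    else
      (if (j : ℕ) - d2 ≤ i ∧ (i : ℕ) ≤ (j : ℕ) - d2 + d2 then
        V ((i : ℕ) - ((j : ℕ) - d2)) else 0)

/-- The resultant `Res(f1,f2)` as the determinant of the Sylvester matrix. -/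
def res {A : Type*} [CommRing A] (d1 d2 : ℕ) (U V : ℕ → A) : A :=
  (sylMatrix d1 d2 U V).det

/-- `multAtLeast F a m` : the plane curve `F = 0` has multiplicity at least `m` at the
(projective) point `a`, i.e. for every direction `v` the univariate polynomial
`t ↦ F(a + t v)` vanishes to order at least `m` at `t = 0`. -/
def multAtLeast {K : Type*} [CommRing K] (F : MvPolynomial (Fin 3) K)
    (a : Fin 3 → K) (m : ℕ) : Prop :=
  ∀ v : Fin 3 → K, ∀ j < m,
    (MvPolynomial.aeval
      (fun i => Polynomial.C (a i) + Polynomial.C (v i) * Polynomial.X) F).coeff j = 0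

/-! Write `p = U₀(T) X₀ + U₁(T) X₁` with `U₀ = a·T`, `U₁ = b·T`. Evaluating `q` at the root
`(U₁ : -U₀)` of `p` gives the resultant, `Res(T) = ± ∑ⱼ Tⱼ qⱼ(b·T, -a·T)`. Both linear forms
vanish at `𝔭 = a × b`, so by homogeneity of `q` the resultant vanishes there to order `d - 1`,
with leading term `± ∑ⱼ 𝔭ⱼ qⱼ(b·v, -a·v)` in the direction `v`.

The μ-basis gives independent vectors `p(x), q(x)` for every `x ≠ 0`: a relation between them
lifts to a syzygy vanishing on the line through `x`, which the equation of that line divides,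
contradicting that `(p, q)` is a basis. If the form `∑ⱼ 𝔭ⱼ qⱼ` were zero, `g(x)` and `𝔭` would
both be orthogonal to `p(x)` and `q(x)`, making `φ` constant. At a point `𝔮` of multiplicity at
least two, put `y = (b·𝔮, -a·𝔮)`: the constant and linear coefficients of `Res` along the line
from `𝔮` in direction `𝔭` say that `𝔮` and `𝔭` are orthogonal to `q(y)`, and both are orthogonal
to `p(y)`, so `𝔮` is proportional to `𝔭`. -/

open scoped Matrix

namespace MvPolynomial

theorem IsHomogeneous.aeval_smul {σ R A : Type*} [CommSemiring R] [CommSemiring A] [Algebra R A]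
    {f : MvPolynomial σ R} {n : ℕ} (hf : f.IsHomogeneous n) (t : A) (x : σ → A) :
    MvPolynomial.aeval (t • x) f = t ^ n * MvPolynomial.aeval x f := by
  conv_lhs => rw [f.as_sum]
  conv_rhs => rw [f.as_sum]
  simp only [map_sum, aeval_monomial, Finset.mul_sum]
  refine Finset.sum_congr rfl fun m hm => ?_
  have hdeg : ∑ i ∈ m.support, m i = n := by
    simpa [Finsupp.weight_apply, Finsupp.sum] using hf (mem_support_iff.mp hm)
  simp only [Pi.smul_apply, smul_eq_mul, mul_pow, Finsupp.prod_mul]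
  rw [Finsupp.prod, Finset.prod_pow_eq_pow_sum, hdeg]
  ring

theorem IsHomogeneous.eval_smul {σ R : Type*} [CommSemiring R] {f : MvPolynomial σ R} {n : ℕ}
    (hf : f.IsHomogeneous n) (t : R) (x : σ → R) : eval (t • x) f = t ^ n * eval x f := by
  rw [← coe_aeval_eq_eval, ← coe_aeval_eq_eval]
  exact hf.aeval_smul t x

theorem aeval_aeval {σ τ R A : Type*} [CommSemiring R] [CommSemiring A] [Algebra R A]
    (y : τ → A) (φ : σ → MvPolynomial τ R) (f : MvPolynomial σ R) :
    aeval y (aeval φ f) = aeval (fun i => aeval y (φ i)) f :=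
  AlgHom.congr_fun (comp_aeval φ (aeval y)) f

theorem eval_aeval {σ τ R : Type*} [CommSemiring R] (y : τ → R) (φ : σ → MvPolynomial τ R)
    (f : MvPolynomial σ R) : eval y (aeval φ f) = eval (fun i => eval y (φ i)) f := by
  simpa [coe_aeval_eq_eval] using aeval_aeval y φ f

theorem aeval_C_comp {σ R : Type*} [CommSemiring R] (y : σ → R) (f : MvPolynomial σ R) :
    aeval (fun i => Polynomial.C (y i)) f = Polynomial.C (eval y f) := by
  rw [← coe_aeval_eq_eval]
  exact aeval_algebraMap_apply (Polynomial R) y f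

theorem eval_aeval_X_one {R : Type*} [CommSemiring R] (f : MvPolynomial (Fin 2) R) (s : R) :
    (aeval ![Polynomial.X, 1] f).eval s = eval ![s, 1] f := by
  rw [← Polynomial.coe_aeval_eq_eval, ← coe_aeval_eq_eval]
  refine (AlgHom.congr_fun (comp_aeval _ (Polynomial.aeval s)) f).trans (congrArg (aeval · f) ?_)
  funext i
  fin_cases i <;> simp

theorem IsHomogeneous.eq_sum_fin_two {R : Type*} [CommSemiring R] {f : MvPolynomial (Fin 2) R}
    {n : ℕ} (hf : f.IsHomogeneous n) :
    f = ∑ i ∈ Finset.range (n + 1),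
      C (coeff (Finsupp.single 0 (n - i) + Finsupp.single 1 i) f) * X 0 ^ (n - i) * X 1 ^ i := by
  set e : ℕ → Fin 2 →₀ ℕ := fun i => Finsupp.single 0 (n - i) + Finsupp.single 1 i
  have he : Set.InjOn e (Finset.range (n + 1)) := fun i _ j _ hij => by
    simpa [e] using DFunLike.congr_fun hij 1
  have hsupp : f.support ⊆ (Finset.range (n + 1)).image e := fun m hm => by
    have hdeg : m 0 + m 1 = n := by
      simpa [Finsupp.weight_apply, Finsupp.sum_fintype] using hf (mem_support_iff.mp hm)
    refine Finset.mem_image.mpr ⟨m 1, Finset.mem_range.mpr (by omega), ?_⟩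
    ext k
    fin_cases k <;> simp [e, ← hdeg]
  calc f = ∑ m ∈ (Finset.range (n + 1)).image e, monomial m (coeff m f) := by
        conv_lhs => rw [f.as_sum]
        exact Finset.sum_subset hsupp fun m _ hm => by simp [notMem_support_iff.mp hm]
    _ = _ := by
        rw [Finset.sum_image he]
        refine Finset.sum_congr rfl fun i _ => ?_
        simp [e, monomial_eq, Finsupp.prod_add_index, pow_add, mul_assoc]

theorem exists_isHomogeneous_eval_eq {σ K : Type*} [Field K] {x : σ → K} (hx : x ≠ 0) (c : K)
    (k : ℕ) : ∃ u : MvPolynomial σ K, u.IsHomogeneous k ∧ eval x u = c := by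
  obtain ⟨i, hi⟩ := Function.ne_iff.mp hx
  exact ⟨C (c / x i ^ k) * X i ^ k, isHomogeneous_C_mul_X_pow _ _ _,
    by simp [div_mul_cancel₀ _ (pow_ne_zero k hi)]⟩

theorem dvd_sub_aeval_update {σ R : Type*} [CommRing R] [DecidableEq σ] (i : σ)
    (s f : MvPolynomial σ R) : X i - s ∣ f - aeval (Function.update X i s) f := by
  induction f using MvPolynomial.induction_on with
  | C a => simp
  | add f g hf hg => simpa [add_sub_add_comm] using dvd_add hf hg
  | mul_X f j hf =>
    rw [map_mul, aeval_X]
    by_cases hj : j = i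
    · subst hj
      rw [Function.update_self]
      convert dvd_add (dvd_mul_of_dvd_left hf (X j))
        (dvd_mul_left (X j - s) (aeval (Function.update X j s) f)) using 1
      ring
    · rw [Function.update_of_ne hj, ← sub_mul]
      exact dvd_mul_of_dvd_left hf _

theorem exists_forall_dvd_of_eval_smul_eq_zero {K : Type*} [Field K] [Infinite K]
    {x : Fin 2 → K} (hx : x ≠ 0) :
    ∃ ℓ : MvPolynomial (Fin 2) K, ℓ ≠ 0 ∧ eval x ℓ = 0 ∧
      ∀ f, (∀ t : K, eval (t • x) f = 0) → ℓ ∣ f := by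
  obtain ⟨i, hi⟩ : ∃ i, x i ≠ 0 := Function.ne_iff.mp hx
  set j : Fin 2 := i.rev
  have hji : j ≠ i := by fin_cases i <;> decide
  refine ⟨X j - C (x j / x i) * X i, fun h => ?_, by simp [div_mul_cancel₀ _ hi], fun f hf => ?_⟩
  · simpa [hji, Pi.single_apply] using congrArg (eval (Pi.single j 1)) h
  set σ := Function.update X j (C (x j / x i) * X i)
  -- the substitution `σ` moves every point onto the line through `x`
  have hσ : ∀ y, (fun k => eval y (σ k)) = (y i / x i) • x := fun y => by
    funext k
    by_cases hk : k = j
    · simp only [σ, hk, Function.update_self, eval_mul, eval_C, eval_X, Pi.smul_apply, smul_eq_mul]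
      ring
    · obtain rfl : k = i := by omega
      simp [σ, hk, div_mul_cancel₀ _ hi]
  have hσf : aeval σ f = 0 := MvPolynomial.funext fun y => by rw [eval_aeval, hσ, hf, map_zero]
  have := dvd_sub_aeval_update j (C (x j / x i) * X i) f
  rwa [hσf, sub_zero] at this

end MvPolynomial

section CrossProduct

variable {K : Type*} [Field K]

theorem exists_eq_smul_crossProduct_of_dotProduct_eq_zero {P Q z : Fin 3 → K}
    (hPQ : P ⨯₃ Q ≠ 0) (hzP : z ⬝ᵥ P = 0) (hzQ : z ⬝ᵥ Q = 0) : ∃ c : K, z = c • P ⨯₃ Q := by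
  have hcross : P ⨯₃ Q ⨯₃ z = 0 := by
    rw [← cross_anticomm, cross_cross_eq_smul_sub_smul', hzQ, dotProduct_comm, hzP]
    simp
  obtain ⟨c, hc⟩ : ∃ c : K, c • P ⨯₃ Q = z := by
    by_contra! h
    exact crossProduct_ne_zero_iff_linearIndependent.mpr
      ((LinearIndependent.pair_iff' hPQ).mpr h) hcross
  exact ⟨c, hc.symm⟩

theorem exists_eq_smul_of_dotProduct_eq_zero {P Q w z : Fin 3 → K} (hPQ : P ⨯₃ Q ≠ 0)
    (hw : w ≠ 0) (hwP : w ⬝ᵥ P = 0) (hwQ : w ⬝ᵥ Q = 0) (hzP : z ⬝ᵥ P = 0) (hzQ : z ⬝ᵥ Q = 0) :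
    ∃ c : K, z = c • w := by
  obtain ⟨c, rfl⟩ := exists_eq_smul_crossProduct_of_dotProduct_eq_zero hPQ hzP hzQ
  obtain ⟨c', rfl⟩ := exists_eq_smul_crossProduct_of_dotProduct_eq_zero hPQ hwP hwQ
  have hc' : c' ≠ 0 := by rintro rfl; simp at hw
  exact ⟨c / c', by rw [smul_smul, div_mul_cancel₀ _ hc']⟩

theorem exists_dotProduct_eq_of_crossProduct_ne_zero {a b : Fin 3 → K} (hab : a ⨯₃ b ≠ 0)
    (s t : K) : ∃ v : Fin 3 → K, a ⬝ᵥ v = s ∧ b ⬝ᵥ v = t := by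
  obtain ⟨k, hk⟩ := Function.ne_iff.mp hab
  set u : Fin 3 → K := Pi.single k 1
  set δ := u ⬝ᵥ a ⨯₃ b
  have hδ : δ ≠ 0 := by simpa [δ, u] using hk
  have ha : a ⬝ᵥ b ⨯₃ u = δ := by rw [triple_product_permutation, triple_product_permutation]
  have hb : b ⬝ᵥ u ⨯₃ a = δ := triple_product_permutation b u a
  refine ⟨(s / δ) • b ⨯₃ u + (t / δ) • u ⨯₃ a, ?_, ?_⟩
  · simp [dotProduct_add, ha, dot_cross_self, hδ]
  · simp [dotProduct_add, hb, dot_self_cross, hδ]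

end CrossProduct

section Resultant

theorem det_sylMatrix_one_submatrix_last {A : Type*} [CommRing A] (m : ℕ) (U V : ℕ → A) :
    ((sylMatrix 1 (m + 1) U V : Matrix (Fin (1 + m + 1)) (Fin (1 + m + 1)) A).submatrix Fin.succ
      (Fin.last (1 + m)).succAbove).det = U 1 ^ (1 + m) := by
  set M : Matrix (Fin (1 + m + 1)) (Fin (1 + m + 1)) A := sylMatrix 1 (m + 1) U V with hM
  have htri : (M.submatrix Fin.succ (Fin.last (1 + m)).succAbove).BlockTriangular id :=
    fun i j (hij : j < i) => by
      have hij : (j : ℕ) < i := hij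
      simp only [hM, Matrix.submatrix_apply, sylMatrix, Matrix.of_apply, Fin.succAbove_last,
        Fin.val_succ, Fin.val_castSucc]
      rw [if_pos (by omega), if_neg (by omega)]
  rw [Matrix.det_of_isUpperTriangular htri]
  trans ∏ _i : Fin (1 + m), U 1
  · refine Finset.prod_congr rfl fun i _ => ?_
    simp only [hM, Matrix.submatrix_apply, sylMatrix, Matrix.of_apply, Fin.succAbove_last,
      Fin.val_succ, Fin.val_castSucc]
    rw [if_pos (by omega), if_pos (by omega), Nat.add_sub_cancel_left]
  · simp

theorem res_one_eq_sum {A : Type*} [CommRing A] (n : ℕ) (U V : ℕ → A) :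
    res 1 n U V = ∑ i ∈ Finset.range (n + 1), (-1) ^ (n - i) * V i * U 0 ^ i * U 1 ^ (n - i) := by
  induction n generalizing V with
  | zero => simp [res, sylMatrix]
  | succ m ih =>
    set M : Matrix (Fin (1 + m + 1)) (Fin (1 + m + 1)) A := sylMatrix 1 (m + 1) U V with hM
    have hlast : (0 : Fin (1 + m + 1)) ≠ Fin.last (1 + m) := by
      rw [Ne, Fin.ext_iff, Fin.val_zero, Fin.val_last]; omega
    have hrow : ∀ j, j ≠ 0 ∧ j ≠ Fin.last (1 + m) → M 0 j = 0 := fun j ⟨hj0, hjl⟩ => by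
      have hj0 : (j : ℕ) ≠ 0 := fun h => hj0 (Fin.ext h)
      have hjl : (j : ℕ) ≠ 1 + m := fun h => hjl (Fin.ext (by rw [h, Fin.val_last]))
      have := j.isLt
      simp only [hM, sylMatrix, Matrix.of_apply]
      rw [if_pos (by omega), if_neg (by simp; omega)]
    have hM0 : M 0 0 = U 0 := by simp [hM, sylMatrix]
    have hMlast : M 0 (Fin.last (1 + m)) = V 0 := by
      simp only [hM, sylMatrix, Matrix.of_apply, Fin.val_last]
      rw [if_neg (by omega), if_pos (by omega)]
      simp
    have hminor0 :
        M.submatrix Fin.succ (Fin.succAbove 0) = sylMatrix 1 m U (fun k => V (k + 1)) := by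
      ext i j
      simp only [hM, Matrix.submatrix_apply, sylMatrix, Matrix.of_apply, Fin.succAbove_zero,
        Fin.val_succ]
      split_ifs <;> first | rfl | (congr 1; omega)
    rw [res, Matrix.det_succ_row_zero (n := 1 + m) M, Finset.sum_eq_add_of_mem 0 _
      (Finset.mem_univ _) (Finset.mem_univ _) hlast
      (fun j _ hj => by rw [hrow j hj, mul_zero, zero_mul]), hminor0, ← res, ih,
      det_sylMatrix_one_submatrix_last, hM0, hMlast, Finset.sum_range_succ' _ (m + 1),
      Finset.mul_sum]
    simp only [Fin.val_zero, Fin.val_last, Nat.add_sub_add_right, Nat.sub_zero, add_comm 1 m]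
    congr 1
    · exact Finset.sum_congr rfl fun i _ => by ring
    · ring

variable {K : Type*} [CommRing K]

/-- The linear forms `Uₖ(T)` with `∑ⱼ Tⱼ fⱼ(X) = ∑ₖ Uₖ(T) X₀ ^ (n - k) X₁ ^ k`. -/
def formCoeffs (n : ℕ) (f : Fin 3 → MvPolynomial (Fin 2) K) : ℕ → MvPolynomial (Fin 3) K :=
  fun k => ∑ j, C (coeff (Finsupp.single 0 (n - k) + Finsupp.single 1 k) (f j)) * X j

theorem res_one_formCoeffs {n : ℕ} {q : Fin 3 → MvPolynomial (Fin 2) K}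
    (hq : ∀ j, (q j).IsHomogeneous n) (U : ℕ → MvPolynomial (Fin 3) K) :
    res 1 n U (formCoeffs n q) = (-1) ^ n * ∑ j, X j * aeval ![U 1, -U 0] (q j) := by
  conv_rhs => enter [2, 2, j]; rw [(hq j).eq_sum_fin_two]
  simp only [res_one_eq_sum, formCoeffs, map_sum, map_mul, map_pow, aeval_C, aeval_X,
    Finset.mul_sum, Finset.sum_mul, Matrix.cons_val_zero, Matrix.cons_val_one, algebraMap_eq]
  rw [Finset.sum_comm]
  refine Finset.sum_congr rfl fun j _ => Finset.sum_congr rfl fun i hi => ?_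
  obtain ⟨k, rfl⟩ := Nat.exists_eq_add_of_le (Finset.mem_range_succ_iff.mp hi)
  rw [Nat.add_sub_cancel_left, neg_pow, pow_add]
  have : ((-1) ^ i * (-1) ^ i : MvPolynomial (Fin 3) K) = 1 := by rw [← mul_pow]; simp
  linear_combination -(-1) ^ k * (X j * (C (coeff (Finsupp.single 0 k + Finsupp.single 1 i) (q j))
    * U 1 ^ k * U 0 ^ i)) * this

def lineThrough {ι : Type*} (z v : ι → K) : ι → Polynomial K :=
  fun i => Polynomial.C (z i) + Polynomial.C (v i) * Polynomial.X

theorem aeval_lineThrough_sum_C_mul_X {ι : Type*} [Fintype ι] (c z v : ι → K) :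
    aeval (lineThrough z v) (∑ i, C (c i) * X i) =
      Polynomial.C (c ⬝ᵥ z) + Polynomial.C (c ⬝ᵥ v) * Polynomial.X := by
  simp [lineThrough, dotProduct, Finset.sum_mul, Finset.sum_add_distrib, mul_add, mul_assoc]

theorem sum_lineThrough_mul_C {ι : Type*} [Fintype ι] (z v w : ι → K) :
    ∑ j, lineThrough z v j * Polynomial.C (w j) =
      Polynomial.C (z ⬝ᵥ w) + Polynomial.C (v ⬝ᵥ w) * Polynomial.X := by
  simp [lineThrough, dotProduct, Finset.sum_mul, Finset.sum_add_distrib, add_mul, mul_right_comm]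

/-- The zero `(b·z : -a·z)` of the binary form `(a·z) X₀ + (b·z) X₁`. -/
def linearRoot (a b z : Fin 3 → K) : Fin 2 → K := ![b ⬝ᵥ z, -(a ⬝ᵥ z)]

variable {n : ℕ} {q : Fin 3 → MvPolynomial (Fin 2) K} {a b : Fin 3 → K}
  {U : ℕ → MvPolynomial (Fin 3) K}

theorem aeval_lineThrough_res (hU0 : U 0 = ∑ i, C (a i) * X i) (hU1 : U 1 = ∑ i, C (b i) * X i)
    (hq : ∀ j, (q j).IsHomogeneous n) (z v : Fin 3 → K) :
    aeval (lineThrough z v) (res 1 n U (formCoeffs n q)) = (-1) ^ n *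
      ∑ j, lineThrough z v j * aeval (lineThrough (linearRoot a b z) (linearRoot a b v)) (q j) := by
  have hroot : (fun k => aeval (lineThrough z v) (![U 1, -U 0] k)) =
      lineThrough (linearRoot a b z) (linearRoot a b v) := by
    refine funext (Fin.forall_fin_two.mpr ⟨?_, ?_⟩)
    · rw [Matrix.cons_val_zero, hU1, aeval_lineThrough_sum_C_mul_X]
      simp [lineThrough, linearRoot]
    · rw [Matrix.cons_val_one, Matrix.cons_val_zero, map_neg, hU0, aeval_lineThrough_sum_C_mul_X]
      simp only [lineThrough, linearRoot, Matrix.cons_val_one, Matrix.cons_val_fin_one, map_neg]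
      ring
  rw [res_one_formCoeffs hq U]
  simp only [map_mul, map_pow, map_neg, map_one, map_sum, aeval_X, aeval_aeval, hroot]

theorem aeval_lineThrough_res_of_dotProduct_eq_zero_left (hU0 : U 0 = ∑ i, C (a i) * X i)
    (hU1 : U 1 = ∑ i, C (b i) * X i) (hq : ∀ j, (q j).IsHomogeneous n) {z : Fin 3 → K}
    (hza : a ⬝ᵥ z = 0) (hzb : b ⬝ᵥ z = 0) (v : Fin 3 → K) :
    aeval (lineThrough z v) (res 1 n U (formCoeffs n q)) = Polynomial.X ^ n *
      (Polynomial.C ((-1) ^ n * z ⬝ᵥ fun j => eval (linearRoot a b v) (q j)) +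
        Polynomial.C ((-1) ^ n * v ⬝ᵥ fun j => eval (linearRoot a b v) (q j)) * Polynomial.X) := by
  have hline : lineThrough (linearRoot a b z) (linearRoot a b v) =
      (Polynomial.X : Polynomial K) • fun k => Polynomial.C (linearRoot a b v k) := by
    funext k
    fin_cases k <;> simp [lineThrough, linearRoot, hza, hzb]
  simp only [aeval_lineThrough_res hU0 hU1 hq, hline, (hq _).aeval_smul, aeval_C_comp,
    mul_left_comm _ (Polynomial.X ^ n), ← Finset.mul_sum, sum_lineThrough_mul_C, map_mul,
    map_pow, map_neg, map_one]
  ring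

theorem aeval_lineThrough_res_of_dotProduct_eq_zero_right (hU0 : U 0 = ∑ i, C (a i) * X i)
    (hU1 : U 1 = ∑ i, C (b i) * X i) (hq : ∀ j, (q j).IsHomogeneous n) (z : Fin 3 → K)
    {v : Fin 3 → K} (hva : a ⬝ᵥ v = 0) (hvb : b ⬝ᵥ v = 0) :
    aeval (lineThrough z v) (res 1 n U (formCoeffs n q)) =
      Polynomial.C ((-1) ^ n * z ⬝ᵥ fun j => eval (linearRoot a b z) (q j)) +
        Polynomial.C ((-1) ^ n * v ⬝ᵥ fun j => eval (linearRoot a b z) (q j)) * Polynomial.X := by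
  have hline : lineThrough (linearRoot a b z) (linearRoot a b v) =
      fun k => Polynomial.C (linearRoot a b z k) := by
    funext k
    fin_cases k <;> simp [lineThrough, linearRoot, hva, hvb]
  simp only [aeval_lineThrough_res hU0 hU1 hq, hline, aeval_C_comp, sum_lineThrough_mul_C,
    map_mul, map_pow, map_neg, map_one]
  ring

theorem dotProduct_eq_zero_of_multAtLeast_two (hU0 : U 0 = ∑ i, C (a i) * X i)
    (hU1 : U 1 = ∑ i, C (b i) * X i) (hq : ∀ j, (q j).IsHomogeneous n) {z v : Fin 3 → K}
    (hva : a ⬝ᵥ v = 0) (hvb : b ⬝ᵥ v = 0) (hmult : multAtLeast (res 1 n U (formCoeffs n q)) z 2) :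
    (z ⬝ᵥ fun j => eval (linearRoot a b z) (q j)) = 0 ∧
      (v ⬝ᵥ fun j => eval (linearRoot a b z) (q j)) = 0 := by
  have hline := aeval_lineThrough_res_of_dotProduct_eq_zero_right hU0 hU1 hq z hva hvb
  have hsign : IsUnit ((-1) ^ n : K) := isUnit_neg_one.pow n
  have h0 : (aeval (lineThrough z v) (res 1 n U (formCoeffs n q))).coeff 0 = 0 := hmult v 0 two_pos
  have h1 : (aeval (lineThrough z v) (res 1 n U (formCoeffs n q))).coeff 1 = 0 :=
    hmult v 1 one_lt_two
  rw [hline, Polynomial.coeff_add, Polynomial.coeff_C_zero, Polynomial.coeff_C_mul_X,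
    if_neg zero_ne_one, add_zero, hsign.mul_right_eq_zero] at h0
  rw [hline, Polynomial.coeff_add, Polynomial.coeff_C, if_neg one_ne_zero,
    Polynomial.coeff_C_mul_X, if_pos rfl, zero_add, hsign.mul_right_eq_zero] at h1
  exact ⟨h0, h1⟩

theorem multAtLeast_res (hU0 : U 0 = ∑ i, C (a i) * X i) (hU1 : U 1 = ∑ i, C (b i) * X i)
    (hq : ∀ j, (q j).IsHomogeneous n) {z : Fin 3 → K} (hza : a ⬝ᵥ z = 0) (hzb : b ⬝ᵥ z = 0) :
    multAtLeast (res 1 n U (formCoeffs n q)) z n := fun v j hj => by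
  show (aeval (lineThrough z v) _).coeff j = 0
  rw [aeval_lineThrough_res_of_dotProduct_eq_zero_left hU0 hU1 hq hza hzb,
    Polynomial.coeff_X_pow_mul', if_neg (by omega)]

end Resultant

theorem not_multAtLeast_res_succ {K : Type*} [Field K] [Infinite K] {n : ℕ}
    {q : Fin 3 → MvPolynomial (Fin 2) K} {a b : Fin 3 → K} {U : ℕ → MvPolynomial (Fin 3) K}
    (hU0 : U 0 = ∑ i, C (a i) * X i) (hU1 : U 1 = ∑ i, C (b i) * X i)
    (hq : ∀ j, (q j).IsHomogeneous n) (hab : a ⨯₃ b ≠ 0) {z : Fin 3 → K} (hza : a ⬝ᵥ z = 0)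
    (hzb : b ⬝ᵥ z = 0) (hzq : ∑ j, C (z j) * q j ≠ 0) :
    ¬ multAtLeast (res 1 n U (formCoeffs n q)) z (n + 1) := by
  intro hmult
  obtain ⟨y, hy⟩ : ∃ y, eval y (∑ j, C (z j) * q j) ≠ 0 := by
    by_contra! h
    exact hzq (MvPolynomial.funext fun y => by simpa using h y)
  obtain ⟨v, hva, hvb⟩ := exists_dotProduct_eq_of_crossProduct_ne_zero hab (-y 1) (y 0)
  have hvy : linearRoot a b v = y := by
    funext k
    fin_cases k <;> simp [linearRoot, hva, hvb]
  have hcoeff : (aeval (lineThrough z v) (res 1 n U (formCoeffs n q))).coeff n = 0 :=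
    hmult v n n.lt_succ_self
  rw [aeval_lineThrough_res_of_dotProduct_eq_zero_left hU0 hU1 hq hza hzb,
    Polynomial.coeff_X_pow_mul', if_pos le_rfl, Nat.sub_self, Polynomial.coeff_add,
    Polynomial.coeff_C_zero, Polynomial.coeff_C_mul_X, if_neg zero_ne_one, add_zero, hvy] at hcoeff
  refine hy ?_
  simpa [dotProduct, mul_comm] using (mul_eq_zero.mp hcoeff).resolve_left (by simp)

def IsGenericallyInjective {ι K : Type*} [Field K] (g : ι → MvPolynomial (Fin 2) K) : Prop :=
  ∃ Bad : Finset K, ∀ s ∉ Bad, ∀ t ∉ Bad,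
    (∃ c : K, c ≠ 0 ∧ ∀ i, eval ![t, 1] (g i) = c * eval ![s, 1] (g i)) → s = t

theorem not_isGenericallyInjective_of_eval_eq_smul {ι K : Type*} [Field K] [Infinite K] {d : ℕ}
    {g : ι → MvPolynomial (Fin 2) K} (hg : ∀ i, (g i).IsHomogeneous d) (hg0 : ¬ ∀ i, g i = 0)
    (w : ι → K) (hw : ∀ s : K, ∃ c : K, (fun i => eval ![s, 1] (g i)) = c • w) :
    ¬ IsGenericallyInjective g := by
  classical
  rintro ⟨Bad, hBad⟩
  obtain ⟨i, hi⟩ := not_forall.mp hg0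
  set P : Polynomial K := aeval ![Polynomial.X, 1] (g i)
  have hP : P ≠ 0 := fun h => hi <| by
    rw [← Polynomial.homogenize_eq_of_isHomogeneous (hg i) h, Polynomial.homogenize_zero]
  have hscale : ∀ s, ¬ P.IsRoot s → ∃ c : K, c ≠ 0 ∧ (fun i => eval ![s, 1] (g i)) = c • w :=
    fun s hs => by
      obtain ⟨c, hc⟩ := hw s
      refine ⟨c, fun h0 => hs ?_, hc⟩
      simpa [P, eval_aeval_X_one, h0] using congrFun hc i
  obtain ⟨s, hs⟩ := Infinite.exists_notMem_finset (Bad ∪ P.roots.toFinset)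
  obtain ⟨t, ht⟩ := Infinite.exists_notMem_finset (insert s (Bad ∪ P.roots.toFinset))
  simp only [Finset.mem_union, Finset.mem_insert, Multiset.mem_toFinset, Polynomial.mem_roots hP,
    not_or] at hs ht
  obtain ⟨cs, hcs0, hcs⟩ := hscale s hs.2
  obtain ⟨ct, hct0, hct⟩ := hscale t ht.2.2
  refine ht.1 (hBad s hs.1 t ht.2.1 ⟨ct / cs, div_ne_zero hct0 hcs0, fun j => ?_⟩).symm
  rw [congrFun hct j, congrFun hcs j, Pi.smul_apply, Pi.smul_apply, smul_eq_mul, smul_eq_mul,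
    ← mul_assoc, div_mul_cancel₀ _ hcs0]

structure IsSyzygyBasis {R ι : Type*} [CommRing R] [Fintype ι] (g p q : ι → R) : Prop where
  syzygy_left : ∑ i, p i * g i = 0
  syzygy_right : ∑ i, q i * g i = 0
  span : ∀ a : ι → R, ∑ i, a i * g i = 0 → ∃ c e : R, ∀ i, a i = c * p i + e * q i
  indep : ∀ c e : R, (∀ i, c * p i + e * q i = 0) → c = 0 ∧ e = 0

namespace IsSyzygyBasis

variable {K ι : Type*} [Field K] [Infinite K] [Fintype ι] {g p q : ι → MvPolynomial (Fin 2) K}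

theorem eval_eq_zero_of_eval_smul_eq_zero (hB : IsSyzygyBasis g p q) {x : Fin 2 → K}
    (hx : x ≠ 0) {u w : MvPolynomial (Fin 2) K}
    (h : ∀ j (t : K), eval (t • x) (u * p j + w * q j) = 0) : eval x u = 0 ∧ eval x w = 0 := by
  obtain ⟨ℓ, hℓ0, hℓx, hdvd⟩ := exists_forall_dvd_of_eval_smul_eq_zero hx
  choose r hr using fun j => hdvd _ (h j)
  have hr_syz : ∑ j, r j * g j = 0 := by
    refine (mul_eq_zero.mp ?_).resolve_left hℓ0
    calc ℓ * ∑ j, r j * g j = u * ∑ j, p j * g j + w * ∑ j, q j * g j := by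
          simp only [Finset.mul_sum, ← mul_assoc, ← hr, add_mul, Finset.sum_add_distrib]
      _ = 0 := by rw [hB.syzygy_left, hB.syzygy_right]; ring
  obtain ⟨c, e, hce⟩ := hB.span r hr_syz
  obtain ⟨hu, hw⟩ := hB.indep (u - ℓ * c) (w - ℓ * e) fun j => by
    linear_combination hr j + ℓ * hce j
  rw [sub_eq_zero.mp hu, sub_eq_zero.mp hw]
  simp [hℓx]

theorem linearIndependent_eval (hB : IsSyzygyBasis g p q) {m n : ℕ}
    (hp : ∀ j, (p j).IsHomogeneous m) (hq : ∀ j, (q j).IsHomogeneous n) (hmn : m ≤ n)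
    {x : Fin 2 → K} (hx : x ≠ 0) :
    LinearIndependent K ![fun j => eval x (p j), fun j => eval x (q j)] := by
  rw [LinearIndependent.pair_iff]
  intro s t hst
  -- `u p + t q` is homogeneous and vanishes at `x`, hence on the whole line through `x`
  obtain ⟨u, hu, hux⟩ := exists_isHomogeneous_eval_eq hx s (n - m)
  have hvan : ∀ j (τ : K), eval (τ • x) (u * p j + C t * q j) = 0 := by
    intro j τ
    have hhom : (u * p j + C t * q j).IsHomogeneous n :=
      (Nat.sub_add_cancel hmn ▸ hu.mul (hp j)).add ((hq j).C_mul t)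
    rw [hhom.eval_smul]
    simpa [hux] using Or.inr (congrFun hst j)
  obtain ⟨h1, h2⟩ := hB.eval_eq_zero_of_eval_smul_eq_zero hx hvan
  exact ⟨hux ▸ h1, by simpa using h2⟩

end IsSyzygyBasis

theorem eval_eq_smul_add_smul {K : Type*} [CommRing K] {p : Fin 3 → MvPolynomial (Fin 2) K}
    {a b : Fin 3 → K} (hpab : ∀ j, p j = C (a j) * X 0 + C (b j) * X 1) (x : Fin 2 → K) :
    (fun j => eval x (p j)) = x 0 • a + x 1 • b := by
  funext j
  simp [hpab, mul_comm]

namespace IsSyzygyBasis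

variable {K : Type*} [Field K] [Infinite K] {n : ℕ} {g p q : Fin 3 → MvPolynomial (Fin 2) K}
  {a b : Fin 3 → K}

theorem crossProduct_ne_zero (hB : IsSyzygyBasis g p q)
    (hpab : ∀ j, p j = C (a j) * X 0 + C (b j) * X 1) (hp : ∀ j, (p j).IsHomogeneous 1)
    (hq : ∀ j, (q j).IsHomogeneous n) (hn : 1 ≤ n) : a ⨯₃ b ≠ 0 := by
  rw [crossProduct_ne_zero_iff_linearIndependent, LinearIndependent.pair_iff]
  intro s t hst
  by_contra hst0
  have hx : ![s, t] ≠ 0 := fun h => hst0 ⟨congrFun h 0, congrFun h 1⟩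
  refine (hB.linearIndependent_eval hp hq hn hx).ne_zero 0 ?_
  simpa [eval_eq_smul_add_smul hpab] using hst

theorem sum_C_crossProduct_mul_ne_zero {d : ℕ} (hB : IsSyzygyBasis g p q)
    (hpab : ∀ j, p j = C (a j) * X 0 + C (b j) * X 1) (hp : ∀ j, (p j).IsHomogeneous 1)
    (hq : ∀ j, (q j).IsHomogeneous n) (hn : 1 ≤ n) (hg : ∀ i, (g i).IsHomogeneous d)
    (hg0 : ¬ ∀ i, g i = 0) (hbir : IsGenericallyInjective g) :
    ∑ j, C ((a ⨯₃ b) j) * q j ≠ 0 := by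
  intro hzero
  refine not_isGenericallyInjective_of_eval_eq_smul hg hg0 (a ⨯₃ b) (fun s => ?_) hbir
  have hx : ![s, 1] ≠ 0 := fun h => one_ne_zero (congrFun h 1)
  have hPQ := crossProduct_ne_zero_iff_linearIndependent.mpr
    (hB.linearIndependent_eval hp hq hn hx)
  have hdot : ∀ F G : Fin 3 → MvPolynomial (Fin 2) K, (fun j => eval ![s, 1] (G j)) ⬝ᵥ
      (fun j => eval ![s, 1] (F j)) = eval ![s, 1] (∑ j, F j * G j) :=
    fun F G => by simp [dotProduct, mul_comm]
  refine exists_eq_smul_of_dotProduct_eq_zero hPQ (hB.crossProduct_ne_zero hpab hp hq hn) ?_ ?_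
    (by rw [hdot, hB.syzygy_left, map_zero]) (by rw [hdot, hB.syzygy_right, map_zero])
  · simp [eval_eq_smul_add_smul hpab, dotProduct_add, dot_self_cross, dotProduct_comm _ a,
      dotProduct_comm _ b, dot_cross_self]
  · simpa [dotProduct, mul_comm] using congrArg (eval ![s, 1]) hzero

theorem exists_eq_smul_of_multAtLeast_two {U : ℕ → MvPolynomial (Fin 3) K}
    (hB : IsSyzygyBasis g p q) (hpab : ∀ j, p j = C (a j) * X 0 + C (b j) * X 1)
    (hp : ∀ j, (p j).IsHomogeneous 1) (hq : ∀ j, (q j).IsHomogeneous n) (hn : 1 ≤ n)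
    (hU0 : U 0 = ∑ i, C (a i) * X i) (hU1 : U 1 = ∑ i, C (b i) * X i) {z : Fin 3 → K}
    (hz : z ≠ 0) (hmult : multAtLeast (res 1 n U (formCoeffs n q)) z 2) :
    ∃ c : K, c ≠ 0 ∧ z = c • a ⨯₃ b := by
  have hab := hB.crossProduct_ne_zero hpab hp hq hn
  set y := linearRoot a b z
  obtain ⟨hzQ, habQ⟩ := dotProduct_eq_zero_of_multAtLeast_two hU0 hU1 hq (dot_self_cross a b)
    (dot_cross_self a b) hmult
  obtain ⟨c, hc⟩ : ∃ c : K, z = c • a ⨯₃ b := by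
    by_cases hy : y = 0
    · exact exists_eq_smul_crossProduct_of_dotProduct_eq_zero hab
        (by simpa [y, linearRoot, dotProduct_comm] using congrFun hy 1)
        (by simpa [y, linearRoot, dotProduct_comm] using congrFun hy 0)
    · have hPQ := crossProduct_ne_zero_iff_linearIndependent.mpr
        (hB.linearIndependent_eval hp hq hn hy)
      have hP : ∀ w, w ⬝ᵥ (fun j => eval y (p j)) = (b ⬝ᵥ z) * (w ⬝ᵥ a) - (a ⬝ᵥ z) * (w ⬝ᵥ b) :=
        fun w => by simp [eval_eq_smul_add_smul hpab, y, linearRoot, dotProduct_add, sub_eq_add_neg]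
      refine exists_eq_smul_of_dotProduct_eq_zero hPQ hab ?_ habQ ?_ hzQ
      · rw [hP, dotProduct_comm _ a, dotProduct_comm _ b, dot_self_cross, dot_cross_self]
        ring
      · rw [hP, dotProduct_comm z, dotProduct_comm z]
        ring
  exact ⟨c, by rintro rfl; simp [hz] at hc, hc⟩

end IsSyzygyBasis

theorem stmt15 {K : Type*} [Field K] [IsAlgClosed K] (d : ℕ) (hd : 3 ≤ d)
    (g : Fin 3 → MvPolynomial (Fin 2) K)
    (hg : ∀ i, (g i).IsHomogeneous d)
    (hg0 : ¬ ∀ i, g i = 0)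
    -- `φ` is birational onto its image: it is generically injective
    (hbir : ∃ Bad : Finset K, ∀ s ∉ Bad, ∀ t ∉ Bad,
      (∃ c : K, c ≠ 0 ∧ ∀ i, eval ![t, 1] (g i) = c * eval ![s, 1] (g i)) → s = t)
    -- a `μ`-basis `(p, q)` with `μ = 1`
    (p q : Fin 3 → MvPolynomial (Fin 2) K)
    (hp : ∀ i, (p i).IsHomogeneous 1) (hq : ∀ i, (q i).IsHomogeneous (d - 1))
    (hpsyz : ∑ i, p i * g i = 0) (hqsyz : ∑ i, q i * g i = 0)
    (hgen : ∀ a : Fin 3 → MvPolynomial (Fin 2) K, ∑ i, a i * g i = 0 →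
      ∃ c e : MvPolynomial (Fin 2) K, ∀ i, a i = c * p i + e * q i)
    (hindep : ∀ c e : MvPolynomial (Fin 2) K, (∀ i, c * p i + e * q i = 0) →
      c = 0 ∧ e = 0)
    -- the coefficients of `p` and `q` as forms in `X1, X2` over `K[T1,T2,T3]`;
    -- in particular `U 0, U 1` are the linear forms `U0, U1` with `p = U0 X1 + U1 X2`
    (U V : ℕ → MvPolynomial (Fin 3) K)
    (hU : ∀ k, U k = ∑ i, C (coeff (Finsupp.single 0 (1 - k) + Finsupp.single 1 k) (p i)) * X i)
    (hV : ∀ k, V k = ∑ i, C (coeff (Finsupp.single 0 (d - 1 - k) + Finsupp.single 1 k) (q i)) * X i) :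
    ∃ 𝔭 : Fin 3 → K, 𝔭 ≠ 0 ∧
      multAtLeast (res 1 (d - 1) U V) 𝔭 (d - 1) ∧
      ¬ multAtLeast (res 1 (d - 1) U V) 𝔭 d ∧
      eval 𝔭 (U 0) = 0 ∧ eval 𝔭 (U 1) = 0 ∧
      ∀ 𝔮 : Fin 3 → K, 𝔮 ≠ 0 → multAtLeast (res 1 (d - 1) U V) 𝔮 2 →
        ∃ c : K, c ≠ 0 ∧ 𝔮 = c • 𝔭 := by
  obtain rfl : V = formCoeffs (d - 1) q := funext hV
  have hB : IsSyzygyBasis g p q := ⟨hpsyz, hqsyz, hgen, hindep⟩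
  have hn : 1 ≤ d - 1 := by omega
  set a : Fin 3 → K := fun i => coeff (Finsupp.single 0 1 + Finsupp.single 1 0) (p i)
  set b : Fin 3 → K := fun i => coeff (Finsupp.single 0 0 + Finsupp.single 1 1) (p i)
  have hpab : ∀ j, p j = C (a j) * X 0 + C (b j) * X 1 := fun j => by
    simpa only [Finset.sum_range_succ, Finset.sum_range_zero, zero_add, Nat.sub_zero, Nat.sub_self,
      pow_zero, pow_one, mul_one] using (hp j).eq_sum_fin_two
  have hU0 : U 0 = ∑ i, C (a i) * X i := hU 0
  have hU1 : U 1 = ∑ i, C (b i) * X i := hU 1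
  have hab := hB.crossProduct_ne_zero hpab hp hq hn
  have hsing := not_multAtLeast_res_succ hU0 hU1 hq hab (dot_self_cross a b) (dot_cross_self a b)
    (hB.sum_C_crossProduct_mul_ne_zero hpab hp hq hn hg hg0 hbir)
  rw [Nat.sub_add_cancel (by omega)] at hsing
  refine ⟨a ⨯₃ b, hab, multAtLeast_res hU0 hU1 hq (dot_self_cross a b) (dot_cross_self a b), hsing,
    ?_, ?_, fun _ h𝔮 hmult => hB.exists_eq_smul_of_multAtLeast_two hpab hp hq hn hU0 hU1 h𝔮 hmult⟩
  · simpa [hU0, dotProduct] using dot_self_cross a b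
  · simpa [hU1, dotProduct] using dot_cross_self a b

end
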